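/- Let B_{m,i} = {x ∈ ℤ₄^{2m} : wt₀(x) = 2m−i, wt₁(x) = i} and C_{m,u,v} = {x ∈ ℤ₄^{2m} : wt₁(x)=u, wt₃(x)=v, wt₀(x)=2m−u−v}. Then for x ∈ C_{m,u,v} and 0 ≤ h ≤ 2m−u−v, the number of pairs (y₁,y₂) ∈ B_{m,u+h} × B_{m,v+h} with x = y₁ − y₂ equals the binomial coefficient C(2m−u−v, h). -/

import Mathlib

/-! If `y₁, y₂` are `0/1` vectors with `y₁ - y₂ = x`, then `(y₁ i, y₂ i)` is `(1, 0)` where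
`x i = 1`, `(0, 1)` where `x i = 3`, and `y₁ i = y₂ i` where `x i = 0`. So the pair is determined
by the set `s` of zeros of `x` on which both are `1`, any such `s` occurs, and the weight
conditions `wt₁ y₁ = u + h`, `wt₁ y₂ = v + h` say exactly that `#s = h`. -/

/-- `wt_j(x)`: the number of coordinates of `x` equal to `j`. -/
def wt {n : ℕ} (j : ZMod 4) (x : Fin n → ZMod 4) : ℕ :=
  (Finset.univ.filter fun i => x i = j).card

/-- `B_{m,i} = {x ∈ ℤ₄^{2m} : wt₀(x) = 2m - i, wt₁(x) = i}`. -/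
def Bset (m i : ℕ) : Finset (Fin (2 * m) → ZMod 4) :=
  Finset.univ.filter fun x => wt 0 x = 2 * m - i ∧ wt 1 x = i

/-- `C_{m,u,v} = {x ∈ ℤ₄^{2m} : wt₁(x) = u, wt₃(x) = v, wt₀(x) = 2m - u - v}`. -/
def Cset (m u v : ℕ) : Finset (Fin (2 * m) → ZMod 4) :=
  Finset.univ.filter fun x => wt 1 x = u ∧ wt 3 x = v ∧ wt 0 x = 2 * m - u - v

open Finset

section Weights

variable {n : ℕ}

def level (j : ZMod 4) (y : Fin n → ZMod 4) : Finset (Fin n) :=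
  univ.filter fun i => y i = j

lemma card_level (j : ZMod 4) (y : Fin n → ZMod 4) : #(level j y) = wt j y := rfl

lemma sum_wt_eq_card_filter_mem (y : Fin n → ZMod 4) (s : Finset (ZMod 4)) :
    ∑ a ∈ s, wt a y = #{i | y i ∈ s} := by
  rw [card_eq_sum_card_fiberwise (s := {i | y i ∈ s}) (f := y) (t := s)
    fun i hi => (mem_filter.1 hi).2]
  refine sum_congr rfl fun a ha => ?_
  rw [filter_filter, wt]
  congr 1
  ext i
  simp only [mem_filter, mem_univ, true_and]
  exact ⟨fun h => ⟨h ▸ ha, h⟩, And.right⟩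

lemma sum_wt_eq_iff (y : Fin n → ZMod 4) (s : Finset (ZMod 4)) :
    ∑ a ∈ s, wt a y = n ↔ ∀ i, y i ∈ s := by
  rw [sum_wt_eq_card_filter_mem]
  simpa using card_filter_eq_iff (s := univ) (p := fun i => y i ∈ s)

lemma wt_zero_add_wt_one_eq_iff (y : Fin n → ZMod 4) :
    wt 0 y + wt 1 y = n ↔ ∀ i, y i = 0 ∨ y i = 1 := by
  simpa [sum_pair (show (0 : ZMod 4) ≠ 1 by decide)] using sum_wt_eq_iff y {0, 1}

lemma wt_zero_add_wt_one_add_wt_three_eq_iff (y : Fin n → ZMod 4) :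
    wt 0 y + wt 1 y + wt 3 y = n ↔ ∀ i, y i = 0 ∨ y i = 1 ∨ y i = 3 := by
  have h := sum_wt_eq_iff y {0, 1, 3}
  rw [sum_insert (by decide), sum_pair (by decide), ← add_assoc] at h
  simpa using h

end Weights

section Indicator

variable {n : ℕ}

def indicatorVec (T : Finset (Fin n)) : Fin n → ZMod 4 :=
  fun i => if i ∈ T then 1 else 0

lemma indicatorVec_eq_zero_or_eq_one (T : Finset (Fin n)) (i : Fin n) :
    indicatorVec T i = 0 ∨ indicatorVec T i = 1 := by
  unfold indicatorVec
  split_ifs <;> simp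

lemma level_one_indicatorVec (T : Finset (Fin n)) : level 1 (indicatorVec T) = T := by
  ext i
  by_cases hi : i ∈ T <;> simp +decide [level, indicatorVec, hi]

lemma indicatorVec_level_one {y : Fin n → ZMod 4} (hy : ∀ i, y i = 0 ∨ y i = 1) :
    indicatorVec (level 1 y) = y := by
  funext i
  rcases hy i with h | h <;> simp +decide [indicatorVec, level, h]

end Indicator

lemma mem_Bset_iff {m k : ℕ} {y : Fin (2 * m) → ZMod 4} :
    y ∈ Bset m k ↔ (∀ i, y i = 0 ∨ y i = 1) ∧ wt 1 y = k := by
  have hle : wt 1 y ≤ 2 * m := (card_filter_le _ _).trans_eq (card_fin _)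
  rw [Bset, mem_filter, ← wt_zero_add_wt_one_eq_iff]
  simp only [mem_univ, true_and]
  omega

section Fiber

variable {n : ℕ} {x : Fin n → ZMod 4}

lemma card_level_union {a b : ZMod 4} (hab : a ≠ b) {s : Finset (Fin n)} (hs : s ⊆ level b x) :
    #(level a x ∪ s) = wt a x + #s := by
  refine card_union_of_disjoint (disjoint_of_subset_right hs ?_)
  exact disjoint_filter.2 fun i _ ha hb => hab (ha.symm.trans hb)

def pairOfSubset (x : Fin n → ZMod 4) (s : Finset (Fin n)) :
    (Fin n → ZMod 4) × (Fin n → ZMod 4) :=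
  (indicatorVec (level 1 x ∪ s), indicatorVec (level 3 x ∪ s))

lemma pairOfSubset_sub (hx : ∀ i, x i = 0 ∨ x i = 1 ∨ x i = 3) {s : Finset (Fin n)}
    (hs : s ⊆ level 0 x) : (pairOfSubset x s).1 - (pairOfSubset x s).2 = x := by
  funext i
  by_cases hi : i ∈ s
  · have hxi : x i = 0 := (mem_filter.1 (hs hi)).2
    simp [pairOfSubset, indicatorVec, level, hi, hxi]
  · rcases hx i with hxi | hxi | hxi <;> simp +decide [pairOfSubset, indicatorVec, level, hi, hxi]

lemma wt_one_pairOfSubset_fst {s : Finset (Fin n)} (hs : s ⊆ level 0 x) :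
    wt 1 (pairOfSubset x s).1 = wt 1 x + #s := by
  rw [← card_level, pairOfSubset, level_one_indicatorVec, card_level_union (by decide) hs]

lemma wt_one_pairOfSubset_snd {s : Finset (Fin n)} (hs : s ⊆ level 0 x) :
    wt 1 (pairOfSubset x s).2 = wt 3 x + #s := by
  rw [← card_level, pairOfSubset, level_one_indicatorVec, card_level_union (by decide) hs]

lemma level_zero_inter_level_one_pairOfSubset {s : Finset (Fin n)} (hs : s ⊆ level 0 x) :
    level 0 x ∩ level 1 (pairOfSubset x s).1 = s := by
  have hdisj : Disjoint (level 0 x) (level 1 x) :=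
    disjoint_filter.2 fun i _ h0 h1 => absurd (h0.symm.trans h1) (by decide)
  rw [pairOfSubset, level_one_indicatorVec, inter_union_distrib_left,
    disjoint_iff_inter_eq_empty.1 hdisj, empty_union, inter_eq_right.2 hs]

lemma pairOfSubset_level_zero_inter {y₁ y₂ : Fin n → ZMod 4} (hy₁ : ∀ i, y₁ i = 0 ∨ y₁ i = 1)
    (hy₂ : ∀ i, y₂ i = 0 ∨ y₂ i = 1) (hx : x = y₁ - y₂) :
    pairOfSubset x (level 0 x ∩ level 1 y₁) = (y₁, y₂) := by
  have key : ∀ a b : ZMod 4, (a = 0 ∨ a = 1) → (b = 0 ∨ b = 1) →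
      (a = 1 ↔ a - b = 1 ∨ a - b = 0 ∧ a = 1) ∧ (b = 1 ↔ a - b = 3 ∨ a - b = 0 ∧ a = 1) := by
    decide
  subst hx
  conv_rhs => rw [← indicatorVec_level_one hy₁, ← indicatorVec_level_one hy₂]
  rw [pairOfSubset, Prod.mk.injEq]
  constructor <;> congr 1 <;> ext i <;>
    simp only [level, mem_filter, mem_inter, mem_union, mem_univ, true_and, Pi.sub_apply]
  exacts [(key _ _ (hy₁ i) (hy₂ i)).1.symm, (key _ _ (hy₁ i) (hy₂ i)).2.symm]

theorem card_filter_sub_eq_choose {m : ℕ} {x : Fin (2 * m) → ZMod 4}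
    (hx : ∀ i, x i = 0 ∨ x i = 1 ∨ x i = 3) (h : ℕ) :
    #{p ∈ Bset m (wt 1 x + h) ×ˢ Bset m (wt 3 x + h) | x = p.1 - p.2} = (wt 0 x).choose h := by
  rw [← card_level 0 x, ← card_powersetCard]
  refine card_bij' (fun p _ => level 0 x ∩ level 1 p.1) (fun s _ => pairOfSubset x s)
    ?_ ?_ ?_ ?_
  · rintro ⟨y₁, y₂⟩ hp
    simp only [mem_filter, mem_product, mem_Bset_iff] at hp
    obtain ⟨⟨⟨hy₁, hwt⟩, hy₂, -⟩, hdiff⟩ := hp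
    have hsub : level 0 x ∩ level 1 y₁ ⊆ level 0 x := inter_subset_left
    have hfst : (pairOfSubset x (level 0 x ∩ level 1 y₁)).1 = y₁ := by
      rw [pairOfSubset_level_zero_inter hy₁ hy₂ hdiff]
    rw [← hfst, wt_one_pairOfSubset_fst hsub] at hwt
    exact mem_powersetCard.2 ⟨hsub, Nat.add_left_cancel hwt⟩
  · intro s hs
    obtain ⟨hsub, rfl⟩ := mem_powersetCard.1 hs
    simp only [mem_filter, mem_product, mem_Bset_iff]
    exact ⟨⟨⟨indicatorVec_eq_zero_or_eq_one _, wt_one_pairOfSubset_fst hsub⟩,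
      indicatorVec_eq_zero_or_eq_one _, wt_one_pairOfSubset_snd hsub⟩,
      (pairOfSubset_sub hx hsub).symm⟩
  · rintro ⟨y₁, y₂⟩ hp
    simp only [mem_filter, mem_product, mem_Bset_iff] at hp
    exact pairOfSubset_level_zero_inter hp.1.1.1 hp.1.2.1 hp.2
  · intro s hs
    exact level_zero_inter_level_one_pairOfSubset (mem_powersetCard.1 hs).1

end Fiber

theorem stmt9_general (m u v h : ℕ) (huv : u + v ≤ 2 * m)
    (x : Fin (2 * m) → ZMod 4) (hx : x ∈ Cset m u v) :
    (((Bset m (u + h)) ×ˢ (Bset m (v + h))).filter fun p => x = p.1 - p.2).card =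
      Nat.choose (2 * m - u - v) h := by
  obtain ⟨hwt₁, hwt₃, hwt₀⟩ := (mem_filter.1 hx).2
  have hvals : ∀ i, x i = 0 ∨ x i = 1 ∨ x i = 3 :=
    (wt_zero_add_wt_one_add_wt_three_eq_iff x).1 (by omega)
  rw [← hwt₀, ← hwt₁, ← hwt₃]
  exact card_filter_sub_eq_choose hvals h

/-- for `x ∈ C_{m,u,v}` and `0 ≤ h ≤ 2m - u - v`, the number of pairs
`(y₁,y₂) ∈ B_{m,u+h} × B_{m,v+h}` with `x = y₁ - y₂` equals `C(2m-u-v, h)`. -/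
theorem stmt9 (m u v h : ℕ) (huv : u + v ≤ 2 * m) (hh : h ≤ 2 * m - u - v)
    (x : Fin (2 * m) → ZMod 4) (hx : x ∈ Cset m u v) :
    (((Bset m (u + h)) ×ˢ (Bset m (v + h))).filter fun p => x = p.1 - p.2).card =
      Nat.choose (2 * m - u - v) h :=
  stmt9_general m u v h huv x hx
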